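/- Let k be an algebraically closed field and let A and B be commutative positively graded affine Cohen–Macaulay k-algebras with a common graded Noetherian normalization S, such that A ≅ S ⊗_k V ≅ B as graded S-modules for a finite-dimensional graded k-vector space V (in particular dim_k A_i = dim_k B_i for all i). Suppose B is an integral domain and is Gorenstein on the punctured spectrum. If there is a bijection Φ between the sets of matrix representations Rep_S(A, V)(k) = Hom_{S-alg}(A, *End_S(S ⊗_k V))₀ and Rep_S(B, V)(k) = Hom_{S-alg}(B, *End_S(S ⊗_k V))₀ such that both Φ and Φ⁻¹ are *End_S(S ⊗_k V)-equivariant, then A and B are isomorphic as graded S-algebras. -/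

import Mathlib

universe u

section

variable {k S : Type u} [Field k] [CommRing S] [Algebra k S]

/-- `b : Fin m → M` is a homogeneous `S`-basis of the graded `S`-module `M`, with `b j`
homogeneous of degree `d j`:  each `b j` lies in the degree `d j` component, every element of
`M` is an `S`-linear combination of the `b j`, and the `b j` are `S`-linearly independent.
This says exactly that `M ≅ ⊕ⱼ S(-d j)` as graded `S`-modules; if the multiset of degrees `d`
is recorded by `ν : ℤ →₀ ℕ` it says `M ≅ S ⊗_k V` for the graded vector space
`V = ⊕ₑ k(-e)^{ν e}`. -/
def IsHomogSBasis (S : Type u) [CommRing S] {M : Type u} [AddCommGroup M] [Module S M]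
    (ℳ : ℤ → Set M) {m : ℕ} (d : Fin m → ℤ) (b : Fin m → M) : Prop :=
  (∀ j, b j ∈ ℳ (d j)) ∧
    (∀ x : M, ∃ c : Fin m → S, x = ∑ j, c j • b j) ∧
    ∀ c : Fin m → S, ∑ j, c j • b j = 0 → ∀ j, c j = 0

/-- The graded `S`-module `M` is graded free of type `ν : ℤ →₀ ℕ`, i.e. `M ≅ S ⊗_k V` as graded
`S`-modules where `V = ⊕ₑ k(-e)^{ν e}`. -/
def IsGradedFreeOfType (S : Type u) [CommRing S] {M : Type u} [AddCommGroup M] [Module S M]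
    (ℳ : ℤ → Set M) (ν : ℤ →₀ ℕ) : Prop :=
  ∃ (m : ℕ) (d : Fin m → ℤ) (b : Fin m → M), IsHomogSBasis S ℳ d b ∧
    ∀ e : ℤ, (Finset.univ.filter fun j => d j = e).card = ν e

/-- Every element of the degree `i` component of a graded module with a homogeneous basis
can be written with homogeneous coefficients of the appropriate degrees. -/
lemma aux_homog_coeffs
    (𝒮 : ℤ → Submodule k S) [GradedAlgebra 𝒮]
    {M σM : Type u} [AddCommGroup M] [Module S M]
    [SetLike σM M] [AddSubgroupClass σM M]
    (ℳ : ℤ → σM) [DirectSum.Decomposition ℳ]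
    (hsmul : ∀ {e l : ℤ} {s : S} {x : M}, s ∈ 𝒮 e → x ∈ ℳ l → s • x ∈ ℳ (e + l))
    {m : ℕ} {d : Fin m → ℤ} {b : Fin m → M}
    (hb : IsHomogSBasis S (fun i => (ℳ i : Set M)) d b)
    {i : ℤ} {x : M} (hx : x ∈ ℳ i) :
    ∃ c : Fin m → S, (∀ j, c j ∈ 𝒮 (i - d j)) ∧ x = ∑ j, c j • b j := by
  classical
  obtain ⟨c, hc⟩ := hb.2.1 x
  refine ⟨fun j => (DirectSum.decompose 𝒮 (c j) (i - d j) : S),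
    fun j => SetLike.coe_mem _, ?_⟩
  let P : M →+ M :=
    { toFun := fun y => (DirectSum.decompose ℳ y i : M)
      map_zero' := by simp
      map_add' := fun y z => by
        show (↑(DirectSum.decompose ℳ (y + z) i) : M) = _
        rw [DirectSum.decompose_add, DirectSum.add_apply]
        rfl }
  have hPx : P x = x := DirectSum.decompose_of_mem_same ℳ hx
  have hdec : ∀ j, c j • b j = ∑ e ∈ (DirectSum.decompose 𝒮 (c j)).support,
      (DirectSum.decompose 𝒮 (c j) e : S) • b j := fun j => by
    rw [← Finset.sum_smul, DirectSum.sum_support_decompose]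
  have key : P x = ∑ j, (DirectSum.decompose 𝒮 (c j) (i - d j) : S) • b j := by
    rw [hc, map_sum]
    refine Finset.sum_congr rfl fun j _ => ?_
    rw [hdec j, map_sum]
    have hterm : ∀ e ∈ (DirectSum.decompose 𝒮 (c j)).support,
        P ((DirectSum.decompose 𝒮 (c j) e : S) • b j)
          = if e = i - d j then (DirectSum.decompose 𝒮 (c j) e : S) • b j else 0 := by
      intro e _
      have hmem : (DirectSum.decompose 𝒮 (c j) e : S) • b j ∈ ℳ (e + d j) :=
        hsmul (SetLike.coe_mem _) (hb.1 j)
      by_cases he : e = i - d j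
      · rw [if_pos he]
        have hei : e + d j = i := by omega
        rw [hei] at hmem
        exact DirectSum.decompose_of_mem_same ℳ hmem
      · rw [if_neg he]
        exact DirectSum.decompose_of_mem_ne ℳ hmem (fun hh => he (by omega))
    rw [Finset.sum_congr rfl hterm, Finset.sum_ite_eq' _ (i - d j)]
    by_cases hsupp : i - d j ∈ (DirectSum.decompose 𝒮 (c j)).support
    · rw [if_pos hsupp]
    · rw [if_neg hsupp, DFinsupp.notMem_support_iff.mp hsupp,
        ZeroMemClass.coe_zero, zero_smul]
  rw [← hPx, key]

/-- Each graded component of `S` is finite dimensional over `k`. -/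
lemma aux_S_fd (𝒮 : ℤ → Submodule k S) [GradedAlgebra 𝒮]
    {n : ℕ} (y : Fin n → S) (dy : Fin n → ℤ)
    (hyhom : ∀ j, y j ∈ 𝒮 (dy j)) (hypos : ∀ j, 0 < dy j)
    (hSgen : Algebra.adjoin k (Set.range y) = ⊤) (e : ℤ) :
    FiniteDimensional k ↥(𝒮 e) := by
  classical
  set N := e.toNat with hN
  set P : Finset S :=
    Finset.image (fun a : Fin n → Fin (N + 1) => ∏ j, y j ^ (a j : ℕ)) Finset.univ with hP
  haveI : FiniteDimensional k ↥(Submodule.span k (P : Set S)) :=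
    FiniteDimensional.span_finset k P
  suffices h : 𝒮 e ≤ Submodule.span k (P : Set S) from
    Submodule.finiteDimensional_of_le h
  intro s hs
  have hsspan : s ∈ Submodule.span k ((Submonoid.closure (Set.range y) : Submonoid S) : Set S) := by
    have h2 : s ∈ Subalgebra.toSubmodule (Algebra.adjoin k (Set.range y)) := by
      rw [hSgen]; trivial
    rwa [Algebra.adjoin_eq_span] at h2
  let π : S →ₗ[k] S :=
    { toFun := fun t => (DirectSum.decompose 𝒮 t e : S)
      map_add' := fun a b => by
        show (↑(DirectSum.decompose 𝒮 (a + b) e) : S) = _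
        rw [DirectSum.decompose_add, DirectSum.add_apply]
        rfl
      map_smul' := fun r a => by
        show (↑(DirectSum.decompose 𝒮 (r • a) e) : S) = _
        rw [DirectSum.decompose_smul, RingHom.id_apply, DirectSum.smul_apply]
        rfl }
  have hmono : ∀ z ∈ Submonoid.closure (Set.range y), ∃ a : Fin n → ℕ, z = ∏ j, y j ^ a j := by
    intro z hz
    induction hz using Submonoid.closure_induction with
    | mem x hx =>
      obtain ⟨j, rfl⟩ := hx
      refine ⟨Pi.single j 1, ?_⟩
      rw [Finset.prod_eq_single j (fun j' _ hne => by
          rw [Pi.single_eq_of_ne hne, pow_zero]) (by simp)]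
      rw [Pi.single_eq_same, pow_one]
    | one => exact ⟨0, by simp⟩
    | mul x x' hx hx' ihx ihx' =>
      obtain ⟨a, rfl⟩ := ihx
      obtain ⟨a', rfl⟩ := ihx'
      exact ⟨a + a', by simp [pow_add, Finset.prod_mul_distrib]⟩
  have hmain : ∀ t ∈ Submodule.span k ((Submonoid.closure (Set.range y) : Submonoid S) : Set S),
      π t ∈ Submodule.span k (P : Set S) := by
    intro t ht
    induction ht using Submodule.span_induction with
    | mem z hz =>
      obtain ⟨a, rfl⟩ := hmono z hz
      have hzdeg : (∏ j, y j ^ a j) ∈ 𝒮 (∑ j, (a j : ℤ) * dy j) := by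
        have hgen : ∀ t : Finset (Fin n),
            (∏ j ∈ t, y j ^ a j) ∈ 𝒮 (∑ j ∈ t, (a j : ℤ) * dy j) := by
          intro t
          induction t using Finset.induction with
          | empty => simpa using SetLike.one_mem_graded 𝒮
          | @insert j t hj ih =>
            rw [Finset.prod_insert hj, Finset.sum_insert hj]
            refine SetLike.mul_mem_graded ?_ ih
            have := SetLike.pow_mem_graded (a j) (hyhom j)
            rwa [nsmul_eq_mul] at this
        exact hgen Finset.univ
      by_cases hD : (∑ j, (a j : ℤ) * dy j) = e
      · have hπz : π (∏ j, y j ^ a j) = ∏ j, y j ^ a j := by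
          rw [hD] at hzdeg
          exact DirectSum.decompose_of_mem_same 𝒮 hzdeg
        rw [hπz]
        apply Submodule.subset_span
        have hbound : ∀ j, a j < N + 1 := by
          intro j
          have h1 : (a j : ℤ) ≤ ∑ j', (a j' : ℤ) * dy j' := by
            refine le_trans (le_mul_of_one_le_right (Int.natCast_nonneg _)
              (by have := hypos j; omega)) (Finset.single_le_sum
              (f := fun j' => (a j' : ℤ) * dy j')
              (fun j' _ => mul_nonneg (Int.natCast_nonneg _) (le_of_lt (hypos j')))
              (Finset.mem_univ j))
          rw [hD] at h1
          have h2 : a j ≤ N := by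
            have := Int.toNat_le_toNat h1
            simpa [hN] using this
          omega
        refine Finset.mem_coe.mpr (Finset.mem_image.mpr
          ⟨fun j => ⟨a j, hbound j⟩, Finset.mem_univ _, rfl⟩)
      · have hπz : π (∏ j, y j ^ a j) = 0 :=
          DirectSum.decompose_of_mem_ne 𝒮 hzdeg hD
        rw [hπz]
        exact Submodule.zero_mem _
    | zero => rw [map_zero]; exact Submodule.zero_mem _
    | add a b _ _ ha hb => rw [map_add]; exact add_mem ha hb
    | smul r a _ ha => rw [map_smul]; exact Submodule.smul_mem _ _ ha
  have hfin := hmain s hsspan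
  have hπs : π s = s := DirectSum.decompose_of_mem_same 𝒮 hs
  rwa [hπs] at hfin

/-- Linear isomorphism between the degree `i` component of a graded-free module and a product
of components of `S`, together with finite dimensionality and a finrank formula. -/
lemma aux_component_finrank
    (𝒮 : ℤ → Submodule k S) [GradedAlgebra 𝒮]
    {A : Type u} [AddCommGroup A] [Module k A] [Module S A] [IsScalarTower k S A]
    (𝒜 : ℤ → Submodule k A) [DirectSum.Decomposition 𝒜]
    (hsmul : ∀ {e l : ℤ} {s : S} {x : A}, s ∈ 𝒮 e → x ∈ 𝒜 l → s • x ∈ 𝒜 (e + l))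
    {m : ℕ} {d : Fin m → ℤ} {b : Fin m → A}
    (hb : IsHomogSBasis S (fun i => ((𝒜 i : Set A))) d b)
    (hfd : ∀ e, FiniteDimensional k ↥(𝒮 e)) (i : ℤ) :
    FiniteDimensional k ↥(𝒜 i) ∧
      Module.finrank k ↥(𝒜 i) = ∑ j, Module.finrank k ↥(𝒮 (i - d j)) := by
  classical
  haveI := hfd
  let Θ : ((j : Fin m) → ↥(𝒮 (i - d j))) →ₗ[k] A :=
    { toFun := fun c => ∑ j, (c j : S) • b j
      map_add' := fun c c' => by
        show (∑ j, (((c + c') j : S)) • b j) = (∑ j, ((c j : S)) • b j) + ∑ j, ((c' j : S)) • b j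
        rw [← Finset.sum_add_distrib]
        exact Finset.sum_congr rfl fun j _ => by
          rw [Pi.add_apply, Submodule.coe_add, add_smul]
      map_smul' := fun r c => by
        show (∑ j, (((r • c) j : S)) • b j) = r • ∑ j, ((c j : S)) • b j
        rw [Finset.smul_sum]
        exact Finset.sum_congr rfl fun j _ => by
          rw [Pi.smul_apply, SetLike.val_smul, smul_assoc] }
  have hΘ : ∀ c, Θ c = ∑ j, (c j : S) • b j := fun c => rfl
  have hinj : Function.Injective Θ := by
    rw [injective_iff_map_eq_zero]
    intro c hc
    have := hb.2.2 (fun j => (c j : S)) (by rw [← hΘ c]; exact hc)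
    funext j
    exact Subtype.ext (this j)
  have hrange : LinearMap.range Θ = 𝒜 i := by
    apply le_antisymm
    · rintro x ⟨c, rfl⟩
      rw [hΘ]
      refine Submodule.sum_mem _ fun j _ => ?_
      have := hsmul (c j).2 (hb.1 j)
      rwa [sub_add_cancel] at this
    · intro x hx
      obtain ⟨c, hcdeg, rfl⟩ := aux_homog_coeffs 𝒮 𝒜 hsmul hb hx
      exact ⟨fun j => ⟨c j, hcdeg j⟩, rfl⟩
  let eIso : ((j : Fin m) → ↥(𝒮 (i - d j))) ≃ₗ[k] ↥(𝒜 i) :=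
    (LinearEquiv.ofInjective Θ hinj).trans (LinearEquiv.ofEq _ _ hrange)
  constructor
  · exact Module.Finite.equiv eIso
  · rw [← eIso.finrank_eq, Module.finrank_pi_fintype]

/-- Two graded-free modules of the same type are isomorphic as graded `S`-modules. -/
lemma aux_graded_equiv
    (𝒮 : ℤ → Submodule k S) [GradedAlgebra 𝒮]
    {M σM N σN : Type u} [AddCommGroup M] [Module S M] [AddCommGroup N] [Module S N]
    [SetLike σM M] [AddSubgroupClass σM M] [SetLike σN N] [AddSubgroupClass σN N]
    (ℳ : ℤ → σM) [DirectSum.Decomposition ℳ] (𝒩 : ℤ → σN) [DirectSum.Decomposition 𝒩]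
    (hsM : ∀ {e l : ℤ} {s : S} {x : M}, s ∈ 𝒮 e → x ∈ ℳ l → s • x ∈ ℳ (e + l))
    (hsN : ∀ {e l : ℤ} {s : S} {x : N}, s ∈ 𝒮 e → x ∈ 𝒩 l → s • x ∈ 𝒩 (e + l))
    (ν : ℤ →₀ ℕ)
    (hM : IsGradedFreeOfType S (fun i => (ℳ i : Set M)) ν)
    (hN : IsGradedFreeOfType S (fun i => (𝒩 i : Set N)) ν) :
    ∃ φ : M ≃ₗ[S] N, (∀ (i : ℤ) (x : M), x ∈ ℳ i → φ x ∈ 𝒩 i) ∧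
      (∀ (i : ℤ) (y : N), y ∈ 𝒩 i → φ.symm y ∈ ℳ i) := by
  classical
  obtain ⟨mM, dM, bM, hbM, hcM⟩ := hM
  obtain ⟨mN, dN, bN, hbN, hcN⟩ := hN
  have hliM : LinearIndependent S bM := Fintype.linearIndependent_iff.mpr hbM.2.2
  have hspM : ⊤ ≤ Submodule.span S (Set.range bM) := by
    intro x _
    obtain ⟨c, rfl⟩ := hbM.2.1 x
    exact Submodule.sum_mem _ fun j _ =>
      Submodule.smul_mem _ _ (Submodule.subset_span ⟨j, rfl⟩)
  have hliN : LinearIndependent S bN := Fintype.linearIndependent_iff.mpr hbN.2.2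
  have hspN : ⊤ ≤ Submodule.span S (Set.range bN) := by
    intro x _
    obtain ⟨c, rfl⟩ := hbN.2.1 x
    exact Submodule.sum_mem _ fun j _ =>
      Submodule.smul_mem _ _ (Submodule.subset_span ⟨j, rfl⟩)
  let BM : Module.Basis (Fin mM) S M := Module.Basis.mk hliM hspM
  let BN : Module.Basis (Fin mN) S N := Module.Basis.mk hliN hspN
  let σe : Fin mM ≃ Fin mN := Equiv.ofFiberEquiv (f := dM) (g := dN)
      (fun e => Fintype.equivOfCardEq (by
        rw [Fintype.card_subtype, Fintype.card_subtype, hcM, hcN]))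
  have hσ : ∀ j, dN (σe j) = dM j := fun j => Equiv.ofFiberEquiv_map _ j
  refine ⟨BM.equiv BN σe, ?_, ?_⟩
  · intro i x hx
    obtain ⟨c, hc, rfl⟩ := aux_homog_coeffs 𝒮 ℳ hsM hbM hx
    rw [map_sum]
    refine sum_mem fun j _ => ?_
    rw [map_smul]
    have hbeq : (BM.equiv BN σe) (bM j) = bN (σe j) := by
      have h1 : (BM.equiv BN σe) (BM j) = BN (σe j) := Module.Basis.equiv_apply BM j BN σe
      rwa [Module.Basis.mk_apply, Module.Basis.mk_apply] at h1
    rw [hbeq]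
    have hmem : bN (σe j) ∈ 𝒩 (dM j) := by rw [← hσ j]; exact hbN.1 (σe j)
    have := hsN (hc j) hmem
    rwa [sub_add_cancel] at this
  · intro i y hy
    obtain ⟨c, hc, rfl⟩ := aux_homog_coeffs 𝒮 𝒩 hsN hbN hy
    rw [map_sum]
    refine sum_mem fun j _ => ?_
    rw [map_smul]
    have hbeq : (BM.equiv BN σe).symm (bN j) = bM (σe.symm j) := by
      have h1 : (BN.equiv BM σe.symm) (BN j) = BM (σe.symm j) := Module.Basis.equiv_apply BN j BM σe.symm
      rw [Module.Basis.equiv_symm]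
      rwa [Module.Basis.mk_apply, Module.Basis.mk_apply] at h1
    rw [hbeq]
    have hdm : dM (σe.symm j) = dN j := by
      have := hσ (σe.symm j); rw [Equiv.apply_symm_apply] at this; exact this.symm
    have hmem : bM (σe.symm j) ∈ ℳ (dN j) := by rw [← hdm]; exact hbM.1 (σe.symm j)
    have := hsM (hc j) hmem
    rwa [sub_add_cancel] at this

end

section

variable {k S A F : Type u} [Field k] [CommRing S] [Algebra k S]
  [CommRing A] [Algebra k A] [Algebra S A]
  [AddCommGroup F] [Module S F]

/-- The set `End_S(S ⊗_k V)_i` of `S`-endomorphisms of the graded free module `F = S ⊗_k V`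
that are homogeneous of degree `i`. -/
def EndDeg (ℱ : ℤ → AddSubgroup F) (i : ℤ) : Set (Module.End S F) :=
  {α | ∀ (j : ℤ) (x : F), x ∈ ℱ j → α x ∈ ℱ (j + i)}

/-- A matrix representation of a graded maximal Cohen–Macaulay module of type `V`:
an `S`-algebra homomorphism `μ : A → *End_S(S ⊗_k V)` which is graded of degree `0`, i.e.
`μ(A_i) ⊆ End_S(S ⊗_k V)_i`.  (For the finitely generated module `F = S ⊗_k V` every
`S`-endomorphism is a finite sum of homogeneous ones, so `*End_S(F) = End_S(F)`.)
The set of all of these is `Rep_S(A, V)(k) = Hom_{S-alg}(A, *End_S(S ⊗_k V))₀`. -/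
def IsDegZeroRep (𝒜 : ℤ → Submodule k A) (ℱ : ℤ → AddSubgroup F)
    (μ : A →ₐ[S] Module.End S F) : Prop :=
  ∀ (i : ℤ) (a : A), a ∈ 𝒜 i → μ a ∈ EndDeg ℱ i

/-- A map `Φ : Rep_S(A, V)(k) → Rep_S(B, V)(k)` is `*End_S(S ⊗_k V)`-equivariant if for every
`μ`, every `i ∈ ℤ` and every `α ∈ End_S(S ⊗_k V)_i`, if `α` commutes with `μ(r)` for all
homogeneous `r` then `α` commutes with `Φ(μ)(r)` for all homogeneous `r`. -/
def IsEquivariant {B : Type u} [CommRing B] [Algebra k B] [Algebra S B]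
    (𝒜 : ℤ → Submodule k A) (ℬ : ℤ → Submodule k B) (ℱ : ℤ → AddSubgroup F)
    (Φ : {μ : A →ₐ[S] Module.End S F // IsDegZeroRep 𝒜 ℱ μ} →
         {μ : B →ₐ[S] Module.End S F // IsDegZeroRep ℬ ℱ μ}) : Prop :=
  ∀ (μ : {μ : A →ₐ[S] Module.End S F // IsDegZeroRep 𝒜 ℱ μ}) (i : ℤ) (α : Module.End S F),
    α ∈ EndDeg ℱ i →
    (∀ a : A, (∃ i' : ℤ, a ∈ 𝒜 i') → α * μ.1 a = μ.1 a * α) →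
    ∀ b : B, (∃ i' : ℤ, b ∈ ℬ i') → α * (Φ μ).1 b = (Φ μ).1 b * α

end

/-- A commutative ring is a Gorenstein local ring if it is Noetherian local and admits a regular
sequence contained in the maximal ideal, of length the Krull dimension (so that the ring is
Cohen–Macaulay), spanning an irreducible parameter ideal. -/
def IsGorensteinLocal (C : Type u) [CommRing C] : Prop :=
  IsNoetherianRing C ∧ IsLocalRing C ∧ ∃ rs : List C,
    (∀ x ∈ rs, x ∈ (⊥ : Ideal C).jacobson) ∧
    RingTheory.Sequence.IsRegular C rs ∧
    (rs.length : WithBot ℕ∞) = ringKrullDim C ∧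
    InfIrred (Ideal.span {x | x ∈ rs})

/-- The irrelevant maximal ideal `B₊ = ⊕_{i > 0} Bᵢ` of a positively graded algebra. -/
def irrelevantIdeal {k B : Type u} [Field k] [CommRing B] [Algebra k B]
    (ℬ : ℤ → Submodule k B) : Ideal B :=
  Ideal.span (⋃ i ∈ Set.Ioi (0 : ℤ), (ℬ i : Set B))

/-- **Theorem 2.9 (Morita-type theorem).**  Let `k` be an algebraically closed field and let
`A`, `B` be commutative positively graded affine Cohen–Macaulay `k`-algebras with common graded
Noetherian normalization `S = k[y₁, …, yₙ]`, such that `A ≅ S ⊗_k V ≅ B` as graded `S`-modules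
for a finite dimensional graded `k`-vector space `V` (encoded by `ν : ℤ →₀ ℕ`); in particular
`dim_k Aᵢ = dim_k Bᵢ` for all `i`.  Assume `B` is an integral domain which is Gorenstein on the
punctured spectrum.  If there is a bijection
`Φ : Rep_S(A, V)(k) → Rep_S(B, V)(k)` such that `Φ` and `Φ⁻¹` are both
`*End_S(S ⊗_k V)`-equivariant, then `A` and `B` are isomorphic as graded `S`-algebras. -/
theorem stmt_12 {k S A B F : Type u} [Field k] [IsAlgClosed k]
    [CommRing S] [Algebra k S]
    [CommRing A] [Algebra k A] [Algebra S A] [IsScalarTower k S A]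
    [CommRing B] [Algebra k B] [Algebra S B] [IsScalarTower k S B]
    -- `S = k[y₁, …, yₙ]` is a graded polynomial ring:
    (𝒮 : ℤ → Submodule k S) [GradedAlgebra 𝒮]
    (hSneg : ∀ i : ℤ, i < 0 → 𝒮 i = ⊥) (hS0 : 𝒮 0 = 1)
    (n : ℕ) (y : Fin n → S) (dy : Fin n → ℤ)
    (hyhom : ∀ j, y j ∈ 𝒮 (dy j)) (hypos : ∀ j, 0 < dy j)
    (hAI : AlgebraicIndependent k y) (hSgen : Algebra.adjoin k (Set.range y) = ⊤)
    -- `A` and `B` are positively graded `k`-algebras with degree zero part `k`,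
    -- graded as `S`-algebras, containing `S`:
    (𝒜 : ℤ → Submodule k A) [GradedAlgebra 𝒜]
    (hAneg : ∀ i : ℤ, i < 0 → 𝒜 i = ⊥) (hA0 : 𝒜 0 = 1)
    (ℬ : ℤ → Submodule k B) [GradedAlgebra ℬ]
    (hBneg : ∀ i : ℤ, i < 0 → ℬ i = ⊥) (hB0 : ℬ 0 = 1)
    (hSA : Function.Injective (algebraMap S A))
    (hSB : Function.Injective (algebraMap S B))
    (hSAgr : ∀ (i : ℤ) (s : S), s ∈ 𝒮 i → algebraMap S A s ∈ 𝒜 i)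
    (hSBgr : ∀ (i : ℤ) (s : S), s ∈ 𝒮 i → algebraMap S B s ∈ ℬ i)
    -- `F = S ⊗_k V` is the graded free `S`-module of type `V`, where the finite dimensional
    -- graded `k`-vector space `V` is encoded by its graded dimension `ν`:
    [AddCommGroup F] [Module S F]
    (ℱ : ℤ → AddSubgroup F) [DirectSum.Decomposition ℱ]
    (hF : ∀ {i j : ℤ} {s : S} {x : F}, s ∈ 𝒮 i → x ∈ ℱ j → s • x ∈ ℱ (i + j))
    (ν : ℤ →₀ ℕ) (hFfree : IsGradedFreeOfType S (fun i => (ℱ i : Set F)) ν)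
    -- `A ≅ S ⊗_k V ≅ B` as graded `S`-modules (`A`, `B` are Cohen–Macaulay of type `V`);
    -- in particular `dim_k Aᵢ = dim_k Bᵢ` for all `i`:
    (hACM : IsGradedFreeOfType S (fun i => (𝒜 i : Set A)) ν)
    (hBCM : IsGradedFreeOfType S (fun i => (ℬ i : Set B)) ν)
    -- `B` is an integral domain, Gorenstein on the punctured spectrum:
    [IsDomain B]
    (hGor : ∀ (p : Ideal B) (hp : p.IsPrime), Ideal.IsHomogeneous ℬ p →
      p ≠ irrelevantIdeal ℬ → IsGorensteinLocal (@Localization.AtPrime B _ p hp))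
    -- `Φ` is a bijection between `Rep_S(A, V)(k)` and `Rep_S(B, V)(k)` such that both `Φ`
    -- and `Φ⁻¹` are `*End_S(S ⊗_k V)`-equivariant:
    (Φ : {μ : A →ₐ[S] Module.End S F // IsDegZeroRep 𝒜 ℱ μ} ≃
         {μ : B →ₐ[S] Module.End S F // IsDegZeroRep ℬ ℱ μ})
    (hΦ : IsEquivariant 𝒜 ℬ ℱ Φ) (hΦsymm : IsEquivariant ℬ 𝒜 ℱ Φ.symm) :
    -- then `A` and `B` are isomorphic as graded `S`-algebras:
    ∃ e : A ≃ₐ[S] B, ∀ (i : ℤ) (a : A), a ∈ 𝒜 i → e a ∈ ℬ i := by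
  classical
  -- scalar compatibilities
  have hsA : ∀ {e l : ℤ} {s : S} {x : A}, s ∈ 𝒮 e → x ∈ 𝒜 l → s • x ∈ 𝒜 (e + l) := by
    intro e l s x hs hx
    rw [Algebra.smul_def]
    exact SetLike.mul_mem_graded (hSAgr e s hs) hx
  have hsB : ∀ {e l : ℤ} {s : S} {x : B}, s ∈ 𝒮 e → x ∈ ℬ l → s • x ∈ ℬ (e + l) := by
    intro e l s x hs hx
    rw [Algebra.smul_def]
    exact SetLike.mul_mem_graded (hSBgr e s hs) hx
  have hsF : ∀ {e l : ℤ} {s : S} {x : F}, s ∈ 𝒮 e → x ∈ ℱ l → s • x ∈ ℱ (e + l) :=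
    fun hs hx => hF hs hx
  -- graded S-module isomorphism φ : A ≃ F
  obtain ⟨φ, hφ, hφs⟩ := aux_graded_equiv 𝒮 𝒜 ℱ (fun hs hx => hsA hs hx)
    (fun hs hx => hsF hs hx) ν hACM hFfree
  -- the regular representation of A on F
  let μA : A →ₐ[S] Module.End S F :=
    { toFun := fun a => φ.toLinearMap ∘ₗ (LinearMap.mul S A a) ∘ₗ φ.symm.toLinearMap
      map_one' := by
        ext x
        simp [LinearMap.mul_apply']
      map_mul' := fun a a' => by
        ext x
        simp [LinearMap.mul_apply', Module.End.mul_apply, mul_assoc]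
      map_zero' := by
        ext x
        simp [LinearMap.mul_apply']
      map_add' := fun a a' => by
        ext x
        simp [LinearMap.mul_apply', add_mul]
      commutes' := fun s => by
        ext x
        simp [LinearMap.mul_apply', Module.algebraMap_end_apply, ← Algebra.smul_def] }
  have hμA : ∀ (a : A) (x : F), μA a x = φ (a * φ.symm x) := fun a x => rfl
  have hμArep : IsDegZeroRep 𝒜 ℱ μA := by
    intro i a ha j x hx
    have h2 : a * φ.symm x ∈ 𝒜 (i + j) := SetLike.mul_mem_graded ha (hφs j x hx)
    have h3 := hφ (i + j) _ h2
    rw [show j + i = i + j from add_comm j i]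
    exact h3
  set μApair : {μ : A →ₐ[S] Module.End S F // IsDegZeroRep 𝒜 ℱ μ} := ⟨μA, hμArep⟩ with hμApair
  set ρ : B →ₐ[S] Module.End S F := (Φ μApair).1 with hρdef
  have hρ : IsDegZeroRep ℬ ℱ ρ := (Φ μApair).2
  -- commutation of the two actions
  have hcomm1 : ∀ (i : ℤ) (a : A), a ∈ 𝒜 i → ∀ b : B, (∃ l, b ∈ ℬ l) →
      μA a * ρ b = ρ b * μA a := by
    intro i a ha b hb
    exact hΦ μApair i (μA a) (hμArep i a ha)
      (fun a' _ => by rw [← map_mul, ← map_mul, mul_comm]) b hb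
  have hcomm2 : ∀ (a : A) (b : B), μA a * ρ b = ρ b * μA a := by
    intro a b
    have hstep : ∀ (i : ℤ) (a' : A), a' ∈ 𝒜 i → μA a' * ρ b = ρ b * μA a' := by
      intro i a' ha'
      rw [← DirectSum.sum_support_decompose ℬ b, map_sum, Finset.mul_sum, Finset.sum_mul]
      exact Finset.sum_congr rfl fun l _ => hcomm1 i a' ha' _ ⟨l, SetLike.coe_mem _⟩
    rw [← DirectSum.sum_support_decompose 𝒜 a, map_sum, Finset.sum_mul, Finset.mul_sum]
    exact Finset.sum_congr rfl fun l _ => hstep l _ (SetLike.coe_mem _)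
  -- the algebra homomorphism ψ : B → A
  set f1 : F := φ 1 with hf1def
  have hf1 : ∀ a : A, μA a f1 = φ a := fun a => by
    rw [hμA, LinearEquiv.symm_apply_apply, mul_one]
  let ψlin : B →ₗ[S] A :=
    { toFun := fun b => φ.symm (ρ b f1)
      map_add' := fun b b' => by
        show φ.symm ((ρ (b + b')) f1) = _
        rw [map_add, LinearMap.add_apply, map_add]
      map_smul' := fun s b => by
        show φ.symm ((ρ (s • b)) f1) = _
        rw [map_smul, LinearMap.smul_apply, map_smul, RingHom.id_apply] }
  have hψdef : ∀ b : B, ψlin b = φ.symm (ρ b f1) := fun b => rfl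
  have hψφ : ∀ b : B, φ (ψlin b) = ρ b f1 := fun b => by
    rw [hψdef, LinearEquiv.apply_symm_apply]
  have hψmul : ∀ b b' : B, ψlin (b * b') = ψlin b * ψlin b' := by
    intro b b'
    have h2 : ρ b (ρ b' f1) = μA (ψlin b') (ρ b f1) := by
      rw [← hψφ b', ← hf1 (ψlin b')]
      calc ρ b ((μA (ψlin b')) f1) = (ρ b * μA (ψlin b')) f1 := rfl
        _ = (μA (ψlin b') * ρ b) f1 := by rw [hcomm2]
        _ = μA (ψlin b') (ρ b f1) := rfl
    rw [hψdef, map_mul]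
    have h3 : (ρ b * ρ b') f1 = ρ b (ρ b' f1) := rfl
    rw [h3, h2, ← hψφ b, hμA, LinearEquiv.symm_apply_apply, LinearEquiv.symm_apply_apply,
      mul_comm]
  have hψone : ψlin 1 = 1 := by
    rw [hψdef, map_one]
    show φ.symm ((1 : Module.End S F) f1) = 1
    rw [Module.End.one_apply, hf1def, LinearEquiv.symm_apply_apply]
  let ψ : B →ₐ[S] A := AlgHom.ofLinearMap ψlin hψone hψmul
  have hψeq : ∀ b : B, ψ b = φ.symm (ρ b f1) := fun b => rfl
  -- ψ is graded
  have hψgr : ∀ (i : ℤ) (b : B), b ∈ ℬ i → ψ b ∈ 𝒜 i := by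
    intro i b hb
    have h1 : f1 ∈ ℱ 0 := hφ 0 1 (SetLike.one_mem_graded 𝒜)
    have h2 : ρ b f1 ∈ ℱ (0 + i) := hρ i b hb 0 f1 h1
    rw [zero_add] at h2
    exact hφs i _ h2
  -- ρ = μA ∘ ψ
  have hrep2 : ∀ b : B, ρ b = μA (ψ b) := by
    have hstep : ∀ (i : ℤ) (b : B), b ∈ ℬ i → ρ b = μA (ψ b) := by
      intro i b hb
      have hcommα : ∀ a : A, (∃ l, a ∈ 𝒜 l) → ρ b * μA a = μA a * ρ b := by
        intro a ha
        have h := hΦsymm (Φ μApair) i (ρ b) (hρ i b hb)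
          (fun b' _ => by rw [← map_mul, ← map_mul, mul_comm]) a ha
        rwa [Equiv.symm_apply_apply] at h
      have hcommall : ∀ a : A, ρ b * μA a = μA a * ρ b := by
        intro a
        rw [← DirectSum.sum_support_decompose 𝒜 a, map_sum, Finset.mul_sum, Finset.sum_mul]
        exact Finset.sum_congr rfl fun l _ => hcommα _ ⟨l, SetLike.coe_mem _⟩
      apply LinearMap.ext
      intro x
      have h1 : ρ b x = (ρ b * μA (φ.symm x)) f1 := by
        show ρ b x = ρ b (μA (φ.symm x) f1)
        rw [hf1, LinearEquiv.apply_symm_apply]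
      calc ρ b x = (ρ b * μA (φ.symm x)) f1 := h1
        _ = (μA (φ.symm x) * ρ b) f1 := by rw [hcommall]
        _ = μA (φ.symm x) (ρ b f1) := rfl
        _ = μA (φ.symm x) (φ (ψ b)) := by
              rw [show ρ b f1 = φ (ψ b) from (hψφ b).symm]
        _ = φ (φ.symm x * ψ b) := by rw [hμA, LinearEquiv.symm_apply_apply]
        _ = μA (ψ b) x := by rw [hμA, mul_comm]
    intro b
    conv_lhs => rw [← DirectSum.sum_support_decompose ℬ b]
    conv_rhs => rw [← DirectSum.sum_support_decompose ℬ b]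
    rw [map_sum, map_sum, map_sum]
    exact Finset.sum_congr rfl fun l _ => hstep l _ (SetLike.coe_mem _)
  -- bases
  obtain ⟨mF, dF, bF, hbF, hcF⟩ := hFfree
  obtain ⟨mA, dA, bA, hbA, hcA⟩ := hACM
  obtain ⟨mB, dB, bB, hbB, hcB⟩ := hBCM
  -- F has at least one basis vector
  have hmF : 0 < mF := by
    rcases Nat.eq_zero_or_pos mF with h | h
    · exfalso
      have hν : ∀ e : ℤ, ν e = 0 := by
        intro e
        rw [← hcF e]
        subst h
        simp
      have hBempty : IsEmpty (Fin mB) := by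
        by_contra hne
        rw [not_isEmpty_iff] at hne
        obtain ⟨j⟩ := hne
        have h1 := hcB (dB j)
        rw [hν] at h1
        have h2 : j ∈ Finset.univ.filter (fun j' => dB j' = dB j) := by simp
        rw [Finset.card_eq_zero.mp h1] at h2
        exact absurd h2 (Finset.notMem_empty j)
      obtain ⟨c, hc⟩ := hbB.2.1 1
      rw [Finset.univ_eq_empty, Finset.sum_empty] at hc
      exact one_ne_zero hc
    · exact h
  -- ρ is injective
  have hρinj : ∀ b : B, ρ b = 0 → b = 0 := by
    intro b hb0
    by_contra hbne
    have hliB : LinearIndependent S bB := Fintype.linearIndependent_iff.mpr hbB.2.2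
    have hspB : ⊤ ≤ Submodule.span S (Set.range bB) := by
      intro x _
      obtain ⟨c, rfl⟩ := hbB.2.1 x
      exact Submodule.sum_mem _ fun j _ =>
        Submodule.smul_mem _ _ (Submodule.subset_span ⟨j, rfl⟩)
    haveI : Module.Finite S B := Module.Finite.of_basis (Module.Basis.mk hliB hspB)
    haveI : Nontrivial S :=
      ⟨⟨1, 0, fun h => one_ne_zero (by rw [← map_one (algebraMap S B), h, map_zero])⟩⟩
    obtain ⟨p, hpmonic, hpeval⟩ := IsIntegral.of_finite S b
    have key : ∀ (N : ℕ) (q : Polynomial S), q.natDegree ≤ N → q ≠ 0 →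
        Polynomial.aeval b q = 0 → False := by
      intro N
      induction N with
      | zero =>
        intro q hdeg hq0 hev
        have hq : q = Polynomial.C (q.coeff 0) := Polynomial.eq_C_of_natDegree_le_zero hdeg
        rw [hq, Polynomial.aeval_C] at hev
        have : q.coeff 0 = 0 := hSB (by rw [hev, map_zero])
        exact hq0 (by rw [hq, this, map_zero])
      | succ N ih =>
        intro q hdeg hq0 hev
        by_cases h0 : q.coeff 0 = 0
        · have hq : Polynomial.X * q.divX = q := by
            have h := Polynomial.X_mul_divX_add q
            rwa [h0, map_zero, add_zero] at h
          have hdvx0 : q.divX ≠ 0 := fun h => hq0 (by rw [← hq, h, mul_zero])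
          have hev' : Polynomial.aeval b q.divX = 0 := by
            have h2 : b * Polynomial.aeval b q.divX = 0 := by
              have h3 : Polynomial.aeval b (Polynomial.X * q.divX) = 0 := by rw [hq]; exact hev
              rwa [map_mul, Polynomial.aeval_X] at h3
            rcases mul_eq_zero.mp h2 with h | h
            · exact absurd h hbne
            · exact h
          refine ih q.divX ?_ hdvx0 hev'
          have hlt : q.divX.natDegree < q.natDegree :=
            Polynomial.natDegree_lt_natDegree hdvx0 (Polynomial.degree_divX_lt hq0)
          omega
        · have h1 : Polynomial.aeval (ρ b) q = 0 := by
            rw [Polynomial.aeval_algHom_apply ρ b q, hev, map_zero]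
          rw [hb0] at h1
          have h2 : (algebraMap S (Module.End S F)) (q.coeff 0) = 0 := by
            rw [← h1, Polynomial.aeval_def, Polynomial.eval₂_at_zero]
          have h3 : q.coeff 0 • bF ⟨0, hmF⟩ = 0 := by
            have h4 := congrArg (fun α : Module.End S F => α (bF ⟨0, hmF⟩)) h2
            simpa [Module.algebraMap_end_apply] using h4
          have hsum0 : (∑ j, (if j = (⟨0, hmF⟩ : Fin mF) then q.coeff 0 else 0) • bF j)
              = q.coeff 0 • bF ⟨0, hmF⟩ := by
            rw [Finset.sum_eq_single (⟨0, hmF⟩ : Fin mF)]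
            · rw [if_pos rfl]
            · intro j _ hne
              rw [if_neg hne, zero_smul]
            · intro h
              exact absurd (Finset.mem_univ _) h
          have h6 : (∑ j, (if j = (⟨0, hmF⟩ : Fin mF) then q.coeff 0 else 0) • bF j) = 0 := by
            rw [hsum0]
            exact h3
          have h5 := hbF.2.2 _ h6 ⟨0, hmF⟩
          rw [if_pos rfl] at h5
          exact h0 h5
    exact key p.natDegree p le_rfl (Polynomial.Monic.ne_zero hpmonic) hpeval
  -- ψ is injective
  have hψinj : Function.Injective ψ := by
    rw [injective_iff_map_eq_zero]
    intro b hb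
    apply hρinj
    rw [hrep2 b, hb, map_zero]
  -- finite dimensionality and dimension count
  have hfdS : ∀ e, FiniteDimensional k ↥(𝒮 e) := aux_S_fd 𝒮 y dy hyhom hypos hSgen
  have hAcf := fun i => aux_component_finrank 𝒮 𝒜 (fun hs hx => hsA hs hx) hbA hfdS i
  have hBcf := fun i => aux_component_finrank 𝒮 ℬ (fun hs hx => hsB hs hx) hbB hfdS i
  have hsum : ∀ i : ℤ, (∑ j, Module.finrank k ↥(𝒮 (i - dA j)))
      = ∑ j, Module.finrank k ↥(𝒮 (i - dB j)) := by
    intro i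
    rw [Finset.sum_comp (fun e => Module.finrank k ↥(𝒮 (i - e))) dA,
      Finset.sum_comp (fun e => Module.finrank k ↥(𝒮 (i - e))) dB]
    have himg : Finset.univ.image dA = Finset.univ.image dB := by
      ext e
      simp only [Finset.mem_image, Finset.mem_univ, true_and]
      constructor
      · rintro ⟨j, rfl⟩
        have h1 : 0 < (Finset.univ.filter fun j' => dB j' = dA j).card := by
          rw [hcB, ← hcA]
          exact Finset.card_pos.mpr ⟨j, by simp⟩
        obtain ⟨j', hj'⟩ := Finset.card_pos.mp h1
        exact ⟨j', (Finset.mem_filter.mp hj').2⟩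
      · rintro ⟨j, rfl⟩
        have h1 : 0 < (Finset.univ.filter fun j' => dA j' = dB j).card := by
          rw [hcA, ← hcB]
          exact Finset.card_pos.mpr ⟨j, by simp⟩
        obtain ⟨j', hj'⟩ := Finset.card_pos.mp h1
        exact ⟨j', (Finset.mem_filter.mp hj').2⟩
    rw [himg]
    exact Finset.sum_congr rfl fun e _ => by rw [hcA, ← hcB]
  -- componentwise surjectivity
  have hcompsurj : ∀ (i : ℤ) (a : A), a ∈ 𝒜 i → ∃ b ∈ ℬ i, ψ b = a := by
    intro i
    haveI := (hAcf i).1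
    haveI := (hBcf i).1
    let ψi : ↥(ℬ i) →ₗ[k] ↥(𝒜 i) :=
      { toFun := fun x => ⟨ψ x, hψgr i x x.2⟩
        map_add' := fun x y => Subtype.ext (by
          show ψ ((x : B) + y) = ψ x + ψ y
          rw [map_add])
        map_smul' := fun r x => Subtype.ext (by
          show ψ (r • (x : B)) = r • ψ (x : B)
          rw [Algebra.smul_def, map_mul, IsScalarTower.algebraMap_apply k S B,
            AlgHom.commutes, ← IsScalarTower.algebraMap_apply k S A, ← Algebra.smul_def]) }
    have hinj_i : Function.Injective ψi := by
      intro x x' h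
      exact Subtype.ext (hψinj (congrArg Subtype.val h))
    have hfr : Module.finrank k ↥(ℬ i) = Module.finrank k ↥(𝒜 i) := by
      rw [(hBcf i).2, (hAcf i).2, hsum]
    have hsurj_i := (LinearMap.injective_iff_surjective_of_finrank_eq_finrank hfr).mp hinj_i
    intro a ha
    obtain ⟨x, hx⟩ := hsurj_i ⟨a, ha⟩
    exact ⟨x, x.2, congrArg Subtype.val hx⟩
  -- global surjectivity
  have hψsurj : Function.Surjective ψ := by
    intro a
    have hchoice : ∀ i : ℤ, ∃ b : B, ψ b = (DirectSum.decompose 𝒜 a i : A) := fun i =>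
      (hcompsurj i _ (SetLike.coe_mem _)).imp fun b hb => hb.2
    choose g hg using hchoice
    refine ⟨∑ i ∈ (DirectSum.decompose 𝒜 a).support, g i, ?_⟩
    rw [map_sum]
    simp_rw [hg]
    exact DirectSum.sum_support_decompose 𝒜 a
  -- conclusion
  let E : B ≃ₐ[S] A := AlgEquiv.ofBijective ψ ⟨hψinj, hψsurj⟩
  refine ⟨E.symm, ?_⟩
  intro i a ha
  obtain ⟨b, hbmem, hba⟩ := hcompsurj i a ha
  have hEb : E.symm a = b := by
    rw [← hba]
    show E.symm (E b) = b
    rw [AlgEquiv.symm_apply_apply]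
  rw [hEb]
  exact hbmem
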